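/- arXiv:math/0608128 — 7 statements merged into one kernel-verified Lean document; each statement's English description precedes it below -/
import Mathlib

section
/- Let H be a complex Hilbert space, B its open unit ball, τ ∈ H a unit vector, and f : B → H a ρ-monotone mapping such that the strong limit lim_{r→1⁻} f(rτ) = 0. If limsup_{r→1⁻} Re⟨f(rτ), τ⟩/(r−1) > −∞, then for every x ∈ B one has 2 Re⟨f(x), x*⟩ ≥ limsup_{r→1⁻} Re⟨f(rτ), τ⟩/(r−1); in particular inf_{x∈B} 2 Re⟨f(x), x*⟩ > −∞. -/
open Filter Metric Topology

/-- The normalized support functional `x* = x/(1-‖x‖²) - τ/(1-⟨τ,x⟩)`,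
where the inner product `⟨·,·⟩` of the paper is linear in the first variable,
i.e. `⟨a,b⟩ = inner b a` in Mathlib's convention. -/
noncomputable def xstar {H : Type*} [NormedAddCommGroup H] [InnerProductSpace ℂ H]
    (τ x : H) : H :=
  ((1 - (‖x‖ : ℂ) ^ 2)⁻¹) • x - ((1 - (inner ℂ x τ : ℂ))⁻¹) • τ

/-- `f` is hyperbolically monotone (ρ-monotone) on the open unit ball:
`Re[⟨f(x),x⟩/(1-‖x‖²) + ⟨y,f(y)⟩/(1-‖y‖²)] ≥ Re[(⟨f(x),y⟩+⟨x,f(y)⟩)/(1-⟨x,y⟩)]`,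
with the paper's inner product (linear in the first variable). -/
def RhoMonotone {H : Type*} [NormedAddCommGroup H] [InnerProductSpace ℂ H]
    (f : H → H) : Prop :=
  ∀ x ∈ ball (0 : H) 1, ∀ y ∈ ball (0 : H) 1,
    (((inner ℂ y (f x) : ℂ) + (inner ℂ (f y) x : ℂ)) / (1 - (inner ℂ y x : ℂ))).re ≤
      ((inner ℂ x (f x) : ℂ) / (1 - (‖x‖ : ℂ) ^ 2)
        + (inner ℂ (f y) y : ℂ) / (1 - (‖y‖ : ℂ) ^ 2)).re

/-! Test the ρ-monotonicity of `f` against the radial points `y = rτ`. After division by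
`r - 1 < 0` this bounds the difference quotient `Re⟨f(rτ),τ⟩/(r-1)` from above by an expression
that, because `f(rτ) → 0`, tends to `2 Re⟨f(x),x*⟩` as `r → 1⁻`. -/

section

variable {H : Type*} [NormedAddCommGroup H] [InnerProductSpace ℂ H]

theorem inner_xstar_left (τ x v : H) :
    inner ℂ (xstar τ x) v =
      inner ℂ x v / (1 - (‖x‖ : ℂ) ^ 2) - inner ℂ τ v / (1 - inner ℂ τ x) := by
  simp only [xstar, inner_sub_left, inner_smul_left, map_inv₀, map_sub, map_one, map_pow,
    Complex.conj_ofReal, inner_conj_symm, div_eq_inv_mul]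

theorem one_sub_inner_ne_zero_of_mem_ball {τ x : H} (hτ : ‖τ‖ = 1) (hx : x ∈ ball (0 : H) 1) :
    1 - inner ℂ τ x ≠ 0 := by
  refine sub_ne_zero.2 fun h => ?_
  have hle := norm_inner_le_norm (𝕜 := ℂ) τ x
  rw [← h, norm_one, hτ, one_mul] at hle
  exact (mem_ball_zero_iff.1 hx).not_ge hle

theorem RhoMonotone.re_radial_le {f : H → H} (hf : RhoMonotone f) {τ x : H} (hτ : ‖τ‖ = 1)
    (hx : x ∈ ball (0 : H) 1) {r : ℝ} (hr0 : 0 < r) (hr1 : r < 1) :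
    (((r : ℂ) * inner ℂ τ (f x) + inner ℂ (f ((r : ℂ) • τ)) x) / (1 - r * inner ℂ τ x)).re ≤
      (inner ℂ x (f x) / (1 - (‖x‖ : ℂ) ^ 2)).re +
        r * (inner ℂ τ (f ((r : ℂ) • τ))).re / (1 - r ^ 2) := by
  have hnorm : ‖(r : ℂ) • τ‖ = r := by
    rw [norm_smul, hτ, mul_one, Complex.norm_real, Real.norm_of_nonneg hr0.le]
  have hy : (r : ℂ) • τ ∈ ball (0 : H) 1 := by rwa [mem_ball_zero_iff, hnorm]
  have h := hf x hx _ hy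
  rw [inner_smul_left, inner_smul_left, inner_smul_right, Complex.conj_ofReal, hnorm] at h
  refine h.trans_eq ?_
  rw [Complex.add_re, show (1 : ℂ) - (r : ℂ) ^ 2 = ((1 - r ^ 2 : ℝ) : ℂ) by push_cast; ring,
    Complex.div_ofReal_re, Complex.re_ofReal_mul, ← inner_conj_symm (f _) τ, Complex.conj_re]

theorem RhoMonotone.re_div_sub_one_le {f : H → H} (hf : RhoMonotone f) {τ x : H}
    (hτ : ‖τ‖ = 1) (hx : x ∈ ball (0 : H) 1) {r : ℝ} (hr0 : 0 < r) (hr1 : r < 1) :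
    (inner ℂ τ (f ((r : ℂ) • τ))).re / (r - 1) ≤
      (1 + r) / r * ((inner ℂ x (f x) / (1 - (‖x‖ : ℂ) ^ 2)).re -
        (((r : ℂ) * inner ℂ τ (f x) + inner ℂ (f ((r : ℂ) • τ)) x) /
          (1 - r * inner ℂ τ x)).re) := by
  have hsub₁ : 1 - r ≠ 0 := sub_ne_zero.2 hr1.ne'
  have hsub₂ : r - 1 ≠ 0 := sub_ne_zero.2 hr1.ne
  calc (inner ℂ τ (f ((r : ℂ) • τ))).re / (r - 1)
      = (1 + r) / r * -(r * (inner ℂ τ (f ((r : ℂ) • τ))).re / (1 - r ^ 2)) := by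
        rw [show 1 - r ^ 2 = (1 + r) * (1 - r) by ring]
        field_simp
        ring
    _ ≤ _ := by
        gcongr
        linarith [hf.re_radial_le hτ hx hr0 hr1]

theorem tendsto_radial_bound {f : H → H} {τ x : H}
    (hlim : Tendsto (fun r : ℝ => f ((r : ℂ) • τ)) (𝓝[<] (1 : ℝ)) (𝓝 (0 : H)))
    (hden : 1 - inner ℂ τ x ≠ 0) :
    Tendsto (fun r : ℝ => (1 + r) / r * ((inner ℂ x (f x) / (1 - (‖x‖ : ℂ) ^ 2)).re -
        (((r : ℂ) * inner ℂ τ (f x) + inner ℂ (f ((r : ℂ) • τ)) x) /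
          (1 - r * inner ℂ τ x)).re))
      (𝓝[<] (1 : ℝ)) (𝓝 (2 * (inner ℂ (xstar τ x) (f x)).re)) := by
  have hr : Tendsto (fun r : ℝ => r) (𝓝[<] (1 : ℝ)) (𝓝 1) := tendsto_nhdsWithin_of_tendsto_nhds
    tendsto_id
  have hrC : Tendsto (fun r : ℝ => (r : ℂ)) (𝓝[<] (1 : ℝ)) (𝓝 1) :=
    (Complex.continuous_ofReal.tendsto' 1 1 Complex.ofReal_one).comp hr
  have hfx : Tendsto (fun r : ℝ => inner ℂ (f ((r : ℂ) • τ)) x) (𝓝[<] (1 : ℝ)) (𝓝 0) := by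
    simpa using hlim.inner (tendsto_const_nhds (x := x))
  have hfrac := ((hrC.mul_const (inner ℂ τ (f x))).add hfx).div (tendsto_const_nhds.sub
    (hrC.mul_const (inner ℂ τ x))) (by simpa using hden)
  have hfactor : Tendsto (fun r : ℝ => (1 + r) / r) (𝓝[<] (1 : ℝ)) (𝓝 2) := by
    convert (tendsto_const_nhds (x := (1 : ℝ))).add hr |>.div hr one_ne_zero using 2 <;> norm_num
  rw [inner_xstar_left, Complex.sub_re]
  simpa using hfactor.mul (tendsto_const_nhds.sub (Complex.continuous_re.tendsto _ |>.comp hfrac))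

theorem RhoMonotone.limsup_re_div_sub_one_le {f : H → H} (hf : RhoMonotone f) {τ : H}
    (hτ : ‖τ‖ = 1)
    (hlim : Tendsto (fun r : ℝ => f ((r : ℂ) • τ)) (𝓝[<] (1 : ℝ)) (𝓝 (0 : H)))
    {x : H} (hx : x ∈ ball (0 : H) 1) :
    limsup (fun r : ℝ => (((inner ℂ τ (f ((r : ℂ) • τ))).re / (r - 1) : ℝ) : EReal))
        (𝓝[<] (1 : ℝ)) ≤ ((2 * (inner ℂ (xstar τ x) (f x)).re : ℝ) : EReal) := by
  have hT := (continuous_coe_real_ereal.tendsto _).comp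
    (tendsto_radial_bound hlim (one_sub_inner_ne_zero_of_mem_ball hτ hx))
  rw [← hT.limsup_eq]
  refine limsup_le_limsup ?_
  filter_upwards [Ioo_mem_nhdsLT zero_lt_one] with r hr
  exact EReal.coe_le_coe (hf.re_div_sub_one_le hτ hx hr.1 hr.2)

end

theorem stmt0_general {H : Type*} [NormedAddCommGroup H] [InnerProductSpace ℂ H]
    (τ : H) (hτ : ‖τ‖ = 1) (f : H → H)
    (hmono : RhoMonotone f)
    (hlim : Tendsto (fun r : ℝ => f ((r : ℂ) • τ)) (𝓝[<] (1 : ℝ)) (𝓝 (0 : H)))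
    (hlimsup : ⊥ < limsup (fun r : ℝ =>
        (((inner ℂ τ (f ((r : ℂ) • τ)) : ℂ).re / (r - 1) : ℝ) : EReal)) (𝓝[<] (1 : ℝ))) :
    (∀ x ∈ ball (0 : H) 1,
        limsup (fun r : ℝ =>
            (((inner ℂ τ (f ((r : ℂ) • τ)) : ℂ).re / (r - 1) : ℝ) : EReal)) (𝓝[<] (1 : ℝ)) ≤
          ((2 * (inner ℂ (xstar τ x) (f x) : ℂ).re : ℝ) : EReal)) ∧
      ⊥ < ⨅ x ∈ ball (0 : H) 1,
        ((2 * (inner ℂ (xstar τ x) (f x) : ℂ).re : ℝ) : EReal) := by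
  have hbound := fun x (hx : x ∈ ball (0 : H) 1) => hmono.limsup_re_div_sub_one_le hτ hlim hx
  exact ⟨hbound, hlimsup.trans_le (le_iInf₂ hbound)⟩

theorem stmt0 {H : Type*} [NormedAddCommGroup H] [InnerProductSpace ℂ H] [CompleteSpace H]
    (τ : H) (hτ : ‖τ‖ = 1) (f : H → H)
    (hmono : RhoMonotone f)
    (hlim : Tendsto (fun r : ℝ => f ((r : ℂ) • τ)) (𝓝[<] (1 : ℝ)) (𝓝 (0 : H)))
    (hlimsup : ⊥ < limsup (fun r : ℝ =>
        (((inner ℂ τ (f ((r : ℂ) • τ)) : ℂ).re / (r - 1) : ℝ) : EReal)) (𝓝[<] (1 : ℝ))) :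
    (∀ x ∈ ball (0 : H) 1,
        limsup (fun r : ℝ =>
            (((inner ℂ τ (f ((r : ℂ) • τ)) : ℂ).re / (r - 1) : ℝ) : EReal)) (𝓝[<] (1 : ℝ)) ≤
          ((2 * (inner ℂ (xstar τ x) (f x) : ℂ).re : ℝ) : EReal)) ∧
      ⊥ < ⨅ x ∈ ball (0 : H) 1,
        ((2 * (inner ℂ (xstar τ x) (f x) : ℂ).re : ℝ) : EReal) :=
  stmt0_general τ hτ f hmono hlim hlimsup
end

section
/- Let H be a complex Hilbert space, B its open unit ball, τ ∈ H a unit vector, f : B → H a mapping, and β ∈ ℝ. If 2 Re⟨f(x), x*⟩ ≥ β for all x ∈ B, then liminf_{r→1⁻} Re⟨f(rτ), τ⟩/(r−1) ≥ β. -/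
open Filter Metric Topology

/-! On the radius through `τ` the functional `x*` points along `τ`, and the hypothesis becomes a
one-variable inequality for `Re⟨f(rτ), τ⟩` which, divided by `r - 1 < 0`, bounds the difference
quotient from below by `β (1 + r) / 2 → β`. -/

lemma xstar_ofReal_smul {H : Type*} [NormedAddCommGroup H] [InnerProductSpace ℂ H]
    {τ : H} (hτ : ‖τ‖ = 1) {r : ℝ} (hr : r ≠ -1) :
    xstar τ ((r : ℂ) • τ) = (((r ^ 2 - 1)⁻¹ : ℝ) : ℂ) • τ := by
  have hnorm : (‖(r : ℂ) • τ‖ : ℂ) ^ 2 = (r : ℂ) ^ 2 := by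
    rw [norm_smul, hτ, mul_one, Complex.norm_real, Real.norm_eq_abs, ← Complex.ofReal_pow,
      sq_abs, Complex.ofReal_pow]
  have hinner : (inner ℂ ((r : ℂ) • τ) τ : ℂ) = r := by
    rw [inner_smul_left, inner_self_eq_norm_sq_to_K, hτ]
    simp
  have hr' : (r : ℂ) + 1 ≠ 0 := by
    norm_cast
    exact fun h => hr (eq_neg_of_add_eq_zero_left h)
  rw [xstar, hnorm, hinner, smul_smul, ← sub_smul]
  push_cast
  rcases eq_or_ne (r : ℂ) 1 with h1 | h1
  -- at `r = 1` both sides vanish because `0⁻¹ = 0`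
  · simp [h1]
  · have hsq : (r : ℂ) ^ 2 - 1 ≠ 0 := by
      rw [show (r : ℂ) ^ 2 - 1 = ((r : ℂ) - 1) * ((r : ℂ) + 1) by ring]
      exact mul_ne_zero (sub_ne_zero.mpr h1) hr'
    have hsq' : 1 - (r : ℂ) ^ 2 ≠ 0 := by rw [← neg_sub]; exact neg_ne_zero.mpr hsq
    congr 1
    field_simp
    ring

lemma le_div_sub_one_of_le_two_mul_inv {β g r : ℝ} (hr : r ∈ Set.Ioo (-1 : ℝ) 1)
    (h : β ≤ 2 * ((r ^ 2 - 1)⁻¹ * g)) : β * (1 + r) / 2 ≤ g / (r - 1) := by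
  obtain ⟨hr₀, hr₁⟩ := hr
  have hsq : r ^ 2 - 1 < 0 := by nlinarith
  rw [le_div_iff_of_neg (by linarith)]
  rw [← div_eq_inv_mul, mul_div_assoc', le_div_iff_of_neg hsq] at h
  nlinarith

theorem stmt1_general {H : Type*} [NormedAddCommGroup H] [InnerProductSpace ℂ H]
    (τ : H) (hτ : ‖τ‖ = 1) (f : H → H) (β : ℝ)
    (hβ : ∀ x ∈ ball (0 : H) 1, β ≤ 2 * (inner ℂ (xstar τ x) (f x) : ℂ).re) :
    (β : EReal) ≤ liminf (fun r : ℝ =>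
        (((inner ℂ τ (f ((r : ℂ) • τ)) : ℂ).re / (r - 1) : ℝ) : EReal)) (𝓝[<] (1 : ℝ)) := by
  have hbound : ∀ᶠ r in 𝓝[<] (1 : ℝ), ((β * (1 + r) / 2 : ℝ) : EReal) ≤
      (((inner ℂ τ (f ((r : ℂ) • τ)) : ℂ).re / (r - 1) : ℝ) : EReal) := by
    filter_upwards [Ioo_mem_nhdsLT (show (-1 : ℝ) < 1 by norm_num)] with r hr
    have hball : (r : ℂ) • τ ∈ ball (0 : H) 1 := by
      rw [mem_ball_zero_iff, norm_smul, hτ, mul_one, Complex.norm_real, Real.norm_eq_abs]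
      exact abs_lt.mpr hr
    have h := hβ _ hball
    rw [xstar_ofReal_smul hτ hr.1.ne', inner_smul_left, Complex.conj_ofReal,
      Complex.re_ofReal_mul] at h
    exact EReal.coe_le_coe_iff.mpr (le_div_sub_one_of_le_two_mul_inv hr h)
  have hlim : Tendsto (fun r : ℝ => ((β * (1 + r) / 2 : ℝ) : EReal)) (𝓝[<] 1) (𝓝 (β : EReal)) := by
    exact EReal.tendsto_coe.mpr <| tendsto_nhdsWithin_of_tendsto_nhds <|
      (by fun_prop : Continuous fun r : ℝ => β * (1 + r) / 2).tendsto' 1 β (by ring)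
  calc (β : EReal) = liminf (fun r : ℝ => ((β * (1 + r) / 2 : ℝ) : EReal)) (𝓝[<] 1) :=
        hlim.liminf_eq.symm
    _ ≤ _ := liminf_le_liminf hbound

theorem stmt1 {H : Type*} [NormedAddCommGroup H] [InnerProductSpace ℂ H] [CompleteSpace H]
    (τ : H) (hτ : ‖τ‖ = 1) (f : H → H) (β : ℝ)
    (hβ : ∀ x ∈ ball (0 : H) 1, β ≤ 2 * (inner ℂ (xstar τ x) (f x) : ℂ).re) :
    (β : EReal) ≤ liminf (fun r : ℝ =>
        (((inner ℂ τ (f ((r : ℂ) • τ)) : ℂ).re / (r - 1) : ℝ) : EReal)) (𝓝[<] (1 : ℝ)) :=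
  stmt1_general τ hτ f β hβ
end

section
/- Let H be a complex Hilbert space, B its open unit ball, τ ∈ H a unit vector, f : B → H a mapping, and {F_t}_{t≥0} a flow on B generated by f. Then for every x ∈ B the function ψ(t) := d_τ(F_t(x)) is differentiable on [0,∞) and satisfies ψ'(t) = −2 ψ(t) · Re⟨f(F_t(x)), (F_t(x))*⟩ for all t ≥ 0; in particular ψ'(0) = −2 d_τ(x) · Re⟨f(x), x*⟩. -/
open Filter Metric Topology

/-- The non-Euclidean "distance" `d_τ(x) = |1 - ⟨x,τ⟩|² / (1 - ‖x‖²)`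
(paper's inner product, linear in the first variable: `⟨x,τ⟩ = inner τ x`). -/
noncomputable def dtau {H : Type*} [NormedAddCommGroup H] [InnerProductSpace ℂ H]
    (τ x : H) : ℝ :=
  ‖(1 : ℂ) - (inner ℂ τ x : ℂ)‖ ^ 2 / (1 - ‖x‖ ^ 2)

/-!
Write `d_τ(y) = ‖g‖² / (1 - ‖y‖²)` with `g = 1 - ⟨y,τ⟩`. Along a curve with velocity `v` the
numerator has derivative `-2 Re (conj g ⟨v,τ⟩)` and the denominator `-2 Re ⟨v,y⟩`. Since
`conj g = ‖g‖² g⁻¹`, the quotient rule gives exactly `2 d_τ(y) Re ⟨v, y*⟩`; along the flow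
`v = -f(F_t x)`.
-/

open ComplexConjugate InnerProductSpace

section

variable {H : Type*} [NormedAddCommGroup H] [InnerProductSpace ℂ H]

lemma one_sub_inner_ne_zero {τ y : H} (hτ : ‖τ‖ ≤ 1) (hy : ‖y‖ < 1) :
    (1 : ℂ) - ⟪τ, y⟫_ℂ ≠ 0 := by
  have hlt : ‖⟪τ, y⟫_ℂ‖ < 1 :=
    (norm_inner_le_norm τ y).trans_lt (by nlinarith [norm_nonneg τ, norm_nonneg y])
  exact sub_ne_zero.mpr fun h => by simp [← h] at hlt

lemma re_inner_xstar (τ y w : H) :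
    (⟪xstar τ y, w⟫_ℂ).re = (⟪y, w⟫_ℂ).re / (1 - ‖y‖ ^ 2) - ((1 - ⟪τ, y⟫_ℂ)⁻¹ * ⟪τ, w⟫_ℂ).re := by
  simp only [xstar, inner_sub_left, inner_smul_left, map_inv₀, map_sub, map_one, map_pow,
    Complex.conj_ofReal, inner_conj_symm, Complex.sub_re]
  norm_cast
  rw [Complex.re_ofReal_mul, inv_mul_eq_div]

lemma Complex.re_conj_mul_eq_norm_sq_mul_re_inv_mul {g : ℂ} (hg : g ≠ 0) (z : ℂ) :
    (conj g * z).re = ‖g‖ ^ 2 * (g⁻¹ * z).re := by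
  have hconj : conj g = (‖g‖ ^ 2 : ℝ) * g⁻¹ := by
    rw [Complex.ofReal_pow, ← Complex.mul_conj', mul_comm g, mul_assoc, mul_inv_cancel₀ hg,
      mul_one]
  rw [hconj, mul_assoc, Complex.re_ofReal_mul]

theorem HasDerivWithinAt.dtau {τ : H} (hτ : ‖τ‖ ≤ 1) {c : ℝ → H} {v : H} {s : Set ℝ} {t : ℝ}
    (hc : HasDerivWithinAt c v s t) (ht : ‖c t‖ < 1) :
    HasDerivWithinAt (fun r => dtau τ (c r))
      (2 * dtau τ (c t) * (⟪xstar τ (c t), v⟫_ℂ).re) s t := by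
  let _ : InnerProductSpace ℝ H := InnerProductSpace.rclikeToReal ℂ H
  set g : ℂ := 1 - ⟪τ, c t⟫_ℂ with hg_def
  have hD : 0 < 1 - ‖c t‖ ^ 2 := by nlinarith [norm_nonneg (c t)]
  have hg : g ≠ 0 := one_sub_inner_ne_zero hτ ht
  have hnum : HasDerivWithinAt (fun r => ‖(1 : ℂ) - ⟪τ, c r⟫_ℂ‖ ^ 2)
      (-2 * (conj g * ⟪τ, v⟫_ℂ).re) s t := by
    have hinner : HasDerivWithinAt (fun r => ⟪τ, c r⟫_ℂ) ⟪τ, v⟫_ℂ s t :=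
      ((innerSL ℂ τ).restrictScalars ℝ).hasFDerivAt.comp_hasDerivWithinAt t hc
    refine (hinner.const_sub 1).norm_sq.congr_deriv ?_
    rw [Complex.inner, ← hg_def, neg_mul, Complex.neg_re, mul_comm ⟪τ, v⟫_ℂ]
    ring
  have hden : HasDerivWithinAt (fun r => 1 - ‖c r‖ ^ 2) (-2 * (⟪c t, v⟫_ℂ).re) s t := by
    simpa [real_inner_eq_re_inner ℂ] using hc.norm_sq.const_sub 1
  refine (hnum.div hden hD.ne').congr_deriv ?_
  rw [re_inner_xstar, _root_.dtau, ← hg_def, Complex.re_conj_mul_eq_norm_sq_mul_re_inv_mul hg]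
  field_simp
  ring

end

theorem stmt3_general {H : Type*} [NormedAddCommGroup H] [InnerProductSpace ℂ H]
    (τ : H) (hτ : ‖τ‖ = 1) (f : H → H) (F : ℝ → H → H)
    (hF0 : ∀ x ∈ ball (0 : H) 1, F 0 x = x)
    (hFmaps : ∀ t ≥ (0 : ℝ), ∀ x ∈ ball (0 : H) 1, F t x ∈ ball (0 : H) 1)
    (hFderiv : ∀ x ∈ ball (0 : H) 1, ∀ t ≥ (0 : ℝ),
      HasDerivWithinAt (fun s => F s x) (-(f (F t x))) (Set.Ici (0 : ℝ)) t) :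
    ∀ x ∈ ball (0 : H) 1,
      (∀ t ≥ (0 : ℝ),
        HasDerivWithinAt (fun s => dtau τ (F s x))
          (-2 * dtau τ (F t x) * (inner ℂ (xstar τ (F t x)) (f (F t x)) : ℂ).re)
          (Set.Ici (0 : ℝ)) t) ∧
      HasDerivWithinAt (fun s => dtau τ (F s x))
        (-2 * dtau τ x * (inner ℂ (xstar τ x) (f x) : ℂ).re)
        (Set.Ici (0 : ℝ)) 0 := by
  intro x hx
  have hderiv : ∀ t ≥ (0 : ℝ), HasDerivWithinAt (fun s => dtau τ (F s x))
      (-2 * dtau τ (F t x) * (inner ℂ (xstar τ (F t x)) (f (F t x)) : ℂ).re)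
      (Set.Ici (0 : ℝ)) t := fun t ht =>
    ((hFderiv x hx t ht).dtau hτ.le (mem_ball_zero_iff.mp (hFmaps t ht x hx))).congr_deriv
      (by rw [inner_neg_right, Complex.neg_re]; ring)
  refine ⟨hderiv, ?_⟩
  have hderiv_zero := hderiv 0 le_rfl
  rwa [hF0 x hx] at hderiv_zero

theorem stmt3 {H : Type*} [NormedAddCommGroup H] [InnerProductSpace ℂ H] [CompleteSpace H]
    (τ : H) (hτ : ‖τ‖ = 1) (f : H → H) (F : ℝ → H → H)
    (hF0 : ∀ x ∈ ball (0 : H) 1, F 0 x = x)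
    (hFsemigroup : ∀ t ≥ (0 : ℝ), ∀ s ≥ (0 : ℝ), ∀ x ∈ ball (0 : H) 1,
      F (t + s) x = F t (F s x))
    (hFmaps : ∀ t ≥ (0 : ℝ), ∀ x ∈ ball (0 : H) 1, F t x ∈ ball (0 : H) 1)
    (hFderiv : ∀ x ∈ ball (0 : H) 1, ∀ t ≥ (0 : ℝ),
      HasDerivWithinAt (fun s => F s x) (-(f (F t x))) (Set.Ici (0 : ℝ)) t) :
    ∀ x ∈ ball (0 : H) 1,
      (∀ t ≥ (0 : ℝ),
        HasDerivWithinAt (fun s => dtau τ (F s x))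
          (-2 * dtau τ (F t x) * (inner ℂ (xstar τ (F t x)) (f (F t x)) : ℂ).re)
          (Set.Ici (0 : ℝ)) t) ∧
      HasDerivWithinAt (fun s => dtau τ (F s x))
        (-2 * dtau τ x * (inner ℂ (xstar τ x) (f x) : ℂ).re)
        (Set.Ici (0 : ℝ)) 0 :=
  stmt3_general τ hτ f F hF0 hFmaps hFderiv
end

section
/- Let h be a holomorphic function on the open unit disk 𝔻 = {λ ∈ ℂ : |λ| < 1} with Re h(λ) ≥ 0 for all λ ∈ 𝔻. Then the limit lim_{r→1⁻} (1−r)·h(r) exists, and it is a nonnegative real number. -/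
/-!
Put `ψ(r) = (1 - r) / (1 + r) · Re h(r)`. The Schwarz–Pick lemma, transported to the right
half-plane, makes `ψ` antitone on `(0, 1)`, so `ψ(r) ↓ L ≥ 0` as `r → 1⁻`. Letting `r → 1` in the
same inequality between `z` and `r` gives Julia's inequality `L (1 - |z|²) ≤ Re h(z) |1 - z|²`:
`H = h - L (1 + z) / (1 - z)` still has nonnegative real part, and its `ψ` tends to `0`.
Schwarz–Pick between `r` and `0` gives `|(1 - r)(H(r) - H(0))|² ≤ 4 Re H(0) ψ_H(r)`, hence
`(1 - r) H(r) → 0` and `(1 - r) h(r) → 2L`.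
-/

open Filter Metric Topology Set Complex ComplexConjugate

lemma normSq_one_sub_conj_mul_sub_normSq_sub (z w : ℂ) :
    normSq (1 - conj w * z) - normSq (z - w) = (1 - normSq z) * (1 - normSq w) := by
  simp only [normSq_apply, sub_re, sub_im, mul_re, mul_im, one_re, one_im, conj_re, conj_im]
  ring

lemma normSq_add_conj_sub_normSq_sub (a b : ℂ) :
    normSq (a + conj b) - normSq (a - b) = 4 * a.re * b.re := by
  simp only [normSq_apply, add_re, add_im, sub_re, sub_im, conj_re, conj_im]
  ring

lemma normSq_lt_one_of_mem_ball {z : ℂ} (hz : z ∈ ball (0 : ℂ) 1) : normSq z < 1 := by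
  rw [normSq_eq_norm_sq]
  exact pow_lt_one₀ (norm_nonneg z) (mem_ball_zero_iff.1 hz) two_ne_zero

lemma ne_zero_of_normSq_lt {a b : ℂ} (hab : normSq a < normSq b) : b ≠ 0 :=
  normSq_pos.1 ((normSq_nonneg a).trans_lt hab)

lemma div_mem_ball_of_normSq_lt {a b : ℂ} (hab : normSq a < normSq b) :
    a / b ∈ ball (0 : ℂ) 1 := by
  rw [mem_ball_zero_iff, norm_div, div_lt_one (norm_pos_iff.2 (ne_zero_of_normSq_lt hab))]
  rw [normSq_eq_norm_sq, normSq_eq_norm_sq] at hab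
  exact lt_of_pow_lt_pow_left₀ 2 (norm_nonneg b) hab

section Disk

variable {z w : ℂ}

lemma normSq_sub_lt_normSq_one_sub_conj_mul (hz : z ∈ ball (0 : ℂ) 1)
    (hw : w ∈ ball (0 : ℂ) 1) : normSq (z - w) < normSq (1 - conj w * z) := by
  have hid := normSq_one_sub_conj_mul_sub_normSq_sub z w
  have hpos := mul_pos (sub_pos.2 (normSq_lt_one_of_mem_ball hz))
    (sub_pos.2 (normSq_lt_one_of_mem_ball hw))
  linarith

lemma normSq_add_lt_normSq_one_add_conj_mul (hz : z ∈ ball (0 : ℂ) 1)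
    (hw : w ∈ ball (0 : ℂ) 1) : normSq (z + w) < normSq (1 + conj w * z) := by
  have hz' : -z ∈ ball (0 : ℂ) 1 := by rwa [mem_ball_zero_iff, norm_neg, ← mem_ball_zero_iff]
  simpa [← normSq_neg (z + w), sub_eq_add_neg, add_comm] using
    normSq_sub_lt_normSq_one_sub_conj_mul hz' hw

noncomputable def diskAut (w z : ℂ) : ℂ := (z + w) / (1 + conj w * z)

lemma diskAut_zero (w : ℂ) : diskAut w 0 = w := by simp [diskAut]

lemma mapsTo_diskAut (hw : w ∈ ball (0 : ℂ) 1) :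
    MapsTo (diskAut w) (ball (0 : ℂ) 1) (ball (0 : ℂ) 1) := fun _ hz =>
  div_mem_ball_of_normSq_lt (normSq_add_lt_normSq_one_add_conj_mul hz hw)

lemma differentiableOn_diskAut (hw : w ∈ ball (0 : ℂ) 1) :
    DifferentiableOn ℂ (diskAut w) (ball (0 : ℂ) 1) :=
  (differentiableOn_id.add_const w).div (differentiableOn_id.const_mul _ |>.const_add 1)
    fun _ hz => ne_zero_of_normSq_lt (normSq_add_lt_normSq_one_add_conj_mul hz hw)

lemma diskAut_div_one_sub_conj_mul (hz : z ∈ ball (0 : ℂ) 1) (hw : w ∈ ball (0 : ℂ) 1) :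
    diskAut w ((z - w) / (1 - conj w * z)) = z := by
  have hden := ne_zero_of_normSq_lt (normSq_sub_lt_normSq_one_sub_conj_mul hz hw)
  have hw' : 1 - conj w * w ≠ 0 := by
    rw [mul_comm, mul_conj, ← ofReal_one, ← ofReal_sub, ofReal_ne_zero]
    exact (sub_pos.2 (normSq_lt_one_of_mem_ball hw)).ne'
  have hnum : (z - w) / (1 - conj w * z) + w = z * (1 - conj w * w) / (1 - conj w * z) := by
    rw [div_add' _ _ _ hden]
    ring
  have hdenom : 1 + conj w * ((z - w) / (1 - conj w * z)) =
      (1 - conj w * w) / (1 - conj w * z) := by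
    rw [mul_div_assoc', add_div' _ _ _ hden]
    ring
  rw [diskAut, hnum, hdenom, div_div_div_cancel_right₀ hden, mul_div_cancel_right₀ _ hw']

end Disk

lemma normSq_sub_lt_normSq_add_conj {u c : ℂ} (hu : 0 < u.re) (hc : 0 < c.re) :
    normSq (u - c) < normSq (u + conj c) := by
  have hid := normSq_add_conj_sub_normSq_sub u c
  nlinarith [mul_pos hu hc]

section SchwarzPick

variable {h : ℂ → ℂ} {z w : ℂ}

/-- Schwarz–Pick lemma for holomorphic maps of the disk into the open right half-plane. -/
theorem normSq_sub_mul_le_of_re_pos (hhol : DifferentiableOn ℂ h (ball (0 : ℂ) 1))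
    (hre : ∀ z ∈ ball (0 : ℂ) 1, 0 < (h z).re) (hz : z ∈ ball (0 : ℂ) 1)
    (hw : w ∈ ball (0 : ℂ) 1) :
    normSq (h z - h w) * normSq (1 - conj w * z) ≤ normSq (h z + conj (h w)) * normSq (z - w) := by
  have hlt : ∀ ζ ∈ ball (0 : ℂ) 1,
      normSq (h (diskAut w ζ) - h w) < normSq (h (diskAut w ζ) + conj (h w)) := fun ζ hζ =>
    normSq_sub_lt_normSq_add_conj (hre _ (mapsTo_diskAut hw hζ)) (hre w hw)
  set g : ℂ → ℂ := fun ζ => (h (diskAut w ζ) - h w) / (h (diskAut w ζ) + conj (h w))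
  have hg_maps : MapsTo g (ball (0 : ℂ) 1) (closedBall (0 : ℂ) 1) := fun ζ hζ =>
    ball_subset_closedBall (div_mem_ball_of_normSq_lt (hlt ζ hζ))
  have hg_diff : DifferentiableOn ℂ g (ball (0 : ℂ) 1) := by
    have hcomp := hhol.comp (differentiableOn_diskAut hw) (mapsTo_diskAut hw)
    exact (hcomp.sub_const _).div (hcomp.add_const _) fun ζ hζ => ne_zero_of_normSq_lt (hlt ζ hζ)
  have hg_zero : g 0 = 0 := by simp [g, diskAut_zero]
  have hschwarz := norm_le_norm_of_mapsTo_ball hg_diff hg_maps hg_zero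
    (mem_ball_zero_iff.1 (div_mem_ball_of_normSq_lt (normSq_sub_lt_normSq_one_sub_conj_mul hz hw)))
  simp only [g, diskAut_div_one_sub_conj_mul hz hw, norm_div] at hschwarz
  rw [div_le_div_iff₀ (norm_pos_iff.2 (ne_zero_of_normSq_lt
    (normSq_sub_lt_normSq_add_conj (hre z hz) (hre w hw))))
    (norm_pos_iff.2 (ne_zero_of_normSq_lt (normSq_sub_lt_normSq_one_sub_conj_mul hz hw)))] at hschwarz
  simp only [normSq_eq_norm_sq, ← mul_pow]
  exact pow_le_pow_left₀ (by positivity) (by linarith) 2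

theorem normSq_sub_mul_le_of_re_nonneg (hhol : DifferentiableOn ℂ h (ball (0 : ℂ) 1))
    (hre : ∀ z ∈ ball (0 : ℂ) 1, 0 ≤ (h z).re) (hz : z ∈ ball (0 : ℂ) 1)
    (hw : w ∈ ball (0 : ℂ) 1) :
    normSq (h z - h w) * normSq (1 - conj w * z) ≤ normSq (h z + conj (h w)) * normSq (z - w) := by
  have hshift : ∀ δ : ℝ, 0 < δ → normSq (h z - h w) * normSq (1 - conj w * z) ≤
      normSq (h z + conj (h w) + 2 * δ) * normSq (z - w) := fun δ hδ => by
    have := normSq_sub_mul_le_of_re_pos (h := fun ζ => h ζ + δ) (hhol.add_const _)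
      (fun ζ hζ => by simpa using add_pos_of_nonneg_of_pos (hre ζ hζ) hδ) hz hw
    convert this using 3
    · ring
    · simp only [map_add, conj_ofReal]
      ring
  have hcont : Continuous fun δ : ℝ => normSq (h z + conj (h w) + 2 * δ) * normSq (z - w) := by
    fun_prop
  simpa using ge_of_tendsto ((hcont.tendsto 0).mono_left nhdsWithin_le_nhds)
    (eventually_nhdsWithin_of_forall (s := Ioi 0) hshift)

theorem normSq_sub_mul_le_re_mul_re (hhol : DifferentiableOn ℂ h (ball (0 : ℂ) 1))
    (hre : ∀ z ∈ ball (0 : ℂ) 1, 0 ≤ (h z).re) (hz : z ∈ ball (0 : ℂ) 1)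
    (hw : w ∈ ball (0 : ℂ) 1) :
    normSq (h z - h w) * ((1 - normSq z) * (1 - normSq w)) ≤
      4 * (h z).re * (h w).re * normSq (z - w) := by
  have hsp := normSq_sub_mul_le_of_re_nonneg hhol hre hz hw
  have e₁ := normSq_one_sub_conj_mul_sub_normSq_sub z w
  have e₂ := normSq_add_conj_sub_normSq_sub (h z) (h w)
  rw [sub_eq_iff_eq_add] at e₁ e₂
  rw [e₁, e₂] at hsp
  linarith

theorem sq_re_add_re_mul_le (hhol : DifferentiableOn ℂ h (ball (0 : ℂ) 1))
    (hre : ∀ z ∈ ball (0 : ℂ) 1, 0 ≤ (h z).re) (hz : z ∈ ball (0 : ℂ) 1)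
    (hw : w ∈ ball (0 : ℂ) 1) :
    ((h z).re + (h w).re) ^ 2 * ((1 - normSq z) * (1 - normSq w)) ≤
      4 * (h z).re * (h w).re * normSq (1 - conj w * z) := by
  have hsp := normSq_sub_mul_le_of_re_nonneg hhol hre hz hw
  have e₁ := normSq_one_sub_conj_mul_sub_normSq_sub z w
  have e₂ := normSq_add_conj_sub_normSq_sub (h z) (h w)
  have hre_le : ((h z).re + (h w).re) ^ 2 ≤ normSq (h z + conj (h w)) := by
    simpa [sq] using re_sq_le_normSq (h z + conj (h w))
  have hP : 0 ≤ (1 - normSq z) * (1 - normSq w) := mul_nonneg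
    (sub_nonneg.2 (normSq_lt_one_of_mem_ball hz).le) (sub_nonneg.2 (normSq_lt_one_of_mem_ball hw).le)
  rw [sub_eq_iff_eq_add] at e₁ e₂
  rw [e₁] at hsp ⊢
  rw [e₂] at hsp hre_le
  nlinarith [mul_le_mul_of_nonneg_right hre_le hP]

end SchwarzPick

lemma ofReal_mem_ball_zero_one {r : ℝ} (hr : r ∈ Ioo (0 : ℝ) 1) : (r : ℂ) ∈ ball (0 : ℂ) 1 := by
  rw [mem_ball_zero_iff, norm_real, Real.norm_of_nonneg hr.1.le]
  exact hr.2

noncomputable def angularQuotient (h : ℂ → ℂ) (r : ℝ) : ℝ := (1 - r) / (1 + r) * (h r).re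

section AngularQuotient

variable {h : ℂ → ℂ}

lemma angularQuotient_nonneg (hre : ∀ z ∈ ball (0 : ℂ) 1, 0 ≤ (h z).re) {r : ℝ}
    (hr : r ∈ Ioo (0 : ℝ) 1) : 0 ≤ angularQuotient h r :=
  mul_nonneg (div_nonneg (by linarith [hr.2]) (by linarith [hr.1]))
    (hre _ (ofReal_mem_ball_zero_one hr))

theorem angularQuotient_antitoneOn (hhol : DifferentiableOn ℂ h (ball (0 : ℂ) 1))
    (hre : ∀ z ∈ ball (0 : ℂ) 1, 0 ≤ (h z).re) : AntitoneOn (angularQuotient h) (Ioo 0 1) := by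
  intro r hr s hs hrs
  have key := sq_re_add_re_mul_le hhol hre (ofReal_mem_ball_zero_one hs)
    (ofReal_mem_ball_zero_one hr)
  have hrs_real : (1 : ℂ) - conj (r : ℂ) * s = ((1 - r * s : ℝ) : ℂ) := by
    rw [conj_ofReal]
    push_cast
    ring
  rw [hrs_real, normSq_ofReal, normSq_ofReal, normSq_ofReal] at key
  set U := (h r).re
  set V := (h s).re
  have hU : 0 ≤ U := hre _ (ofReal_mem_ball_zero_one hr)
  have hV : 0 ≤ V := hre _ (ofReal_mem_ball_zero_one hs)
  -- `(1 - s²)(1 - r²) = ab` and `2(1 - rs) = a + b`, so `key` factors as `hprod`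
  set a := (1 - s) * (1 + r)
  set b := (1 + s) * (1 - r)
  have hab : a ≤ b := by nlinarith
  have hprod : (a * U - b * V) * (b * U - a * V) ≤ 0 := by nlinarith
  have haV : a * V ≤ b * U := by
    by_contra! hlt
    nlinarith [mul_nonneg (sub_nonneg.2 hab) (add_nonneg hU hV)]
  unfold angularQuotient
  rw [div_mul_eq_mul_div, div_mul_eq_mul_div, div_le_div_iff₀ (by linarith [hs.1])
    (by linarith [hr.1])]
  linarith

theorem exists_tendsto_angularQuotient (hhol : DifferentiableOn ℂ h (ball (0 : ℂ) 1))
    (hre : ∀ z ∈ ball (0 : ℂ) 1, 0 ≤ (h z).re) :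
    ∃ L : ℝ, 0 ≤ L ∧ (∀ r ∈ Ioo (0 : ℝ) 1, L ≤ angularQuotient h r) ∧
      Tendsto (angularQuotient h) (𝓝[<] 1) (𝓝 L) := by
  have hne : (Ioo (0 : ℝ) 1).Nonempty := nonempty_Ioo.2 zero_lt_one
  have hbdd : BddBelow (angularQuotient h '' Ioo 0 1) :=
    ⟨0, forall_mem_image.2 fun _ hr => angularQuotient_nonneg hre hr⟩
  refine ⟨_, le_csInf (hne.image _) (forall_mem_image.2 fun _ hr => angularQuotient_nonneg hre hr),
    fun r hr => csInf_le hbdd (mem_image_of_mem _ hr),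
    (angularQuotient_antitoneOn hhol hre).tendsto_nhdsWithin_Ioo_left hne hbdd⟩

end AngularQuotient

section Julia

variable {h : ℂ → ℂ} {z : ℂ}

lemma angularQuotient_mul_le (hhol : DifferentiableOn ℂ h (ball (0 : ℂ) 1))
    (hre : ∀ z ∈ ball (0 : ℂ) 1, 0 ≤ (h z).re) {r : ℝ} (hr : r ∈ Ioo (0 : ℝ) 1)
    (hz : z ∈ ball (0 : ℂ) 1) :
    angularQuotient h r * ((1 + r) ^ 2 * (1 - normSq z)) ≤ 4 * (h z).re * normSq (1 - r * z) := by
  have key := sq_re_add_re_mul_le hhol hre hz (ofReal_mem_ball_zero_one hr)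
  rw [conj_ofReal, normSq_ofReal] at key
  set U := (h r).re
  have hU : 0 ≤ U := hre _ (ofReal_mem_ball_zero_one hr)
  have hz' : 0 ≤ (h z).re := hre z hz
  have hP : 0 ≤ (1 - normSq z) * (1 - r * r) :=
    mul_nonneg (sub_nonneg.2 (normSq_lt_one_of_mem_ball hz).le) (by nlinarith [hr.1, hr.2])
  have hψ : angularQuotient h r * ((1 + r) ^ 2 * (1 - normSq z)) =
      U * ((1 - normSq z) * (1 - r * r)) := by
    unfold angularQuotient
    field_simp [(by linarith [hr.1] : (1 : ℝ) + r ≠ 0)]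
    ring
  rw [hψ]
  rcases hU.eq_or_lt with hU0 | hUpos
  · rw [← hU0, zero_mul]
    exact mul_nonneg (mul_nonneg zero_le_four hz') (normSq_nonneg _)
  · refine le_of_mul_le_mul_left ?_ hUpos
    nlinarith [mul_le_mul_of_nonneg_right (pow_le_pow_left₀ hU (le_add_of_nonneg_left hz') 2) hP]

theorem julia_inequality (hhol : DifferentiableOn ℂ h (ball (0 : ℂ) 1))
    (hre : ∀ z ∈ ball (0 : ℂ) 1, 0 ≤ (h z).re) {L : ℝ}
    (hL : ∀ r ∈ Ioo (0 : ℝ) 1, L ≤ angularQuotient h r) (hz : z ∈ ball (0 : ℂ) 1) :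
    L * (1 - normSq z) ≤ (h z).re * normSq (1 - z) := by
  have hP : 0 ≤ 1 - normSq z := sub_nonneg.2 (normSq_lt_one_of_mem_ball hz).le
  have hcont_left : Continuous fun r : ℝ => L * ((1 + r) ^ 2 * (1 - normSq z)) := by fun_prop
  have hcont_right : Continuous fun r : ℝ => 4 * (h z).re * normSq (1 - r * z) := by fun_prop
  have hle := le_of_tendsto_of_tendsto
    ((hcont_left.tendsto 1).mono_left nhdsWithin_le_nhds)
    ((hcont_right.tendsto 1).mono_left nhdsWithin_le_nhds) <| by
      filter_upwards [Ioo_mem_nhdsLT zero_lt_one] with r hr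
      exact (mul_le_mul_of_nonneg_right (hL r hr) (by positivity)).trans
        (angularQuotient_mul_le hhol hre hr hz)
  norm_num at hle
  linarith

end Julia

lemma one_sub_ne_zero_of_mem_ball {z : ℂ} (hz : z ∈ ball (0 : ℂ) 1) : 1 - z ≠ 0 := by
  rw [sub_ne_zero]
  rintro rfl
  simp at hz

lemma re_one_add_div_one_sub (z : ℂ) :
    ((1 + z) / (1 - z)).re = (1 - normSq z) / normSq (1 - z) := by
  rw [div_re, ← add_div]
  congr 1
  simp only [normSq_apply, add_re, add_im, sub_re, sub_im, one_re, one_im]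
  ring

section Extremal

variable {h : ℂ → ℂ}

theorem re_sub_mul_one_add_div_one_sub_nonneg (hhol : DifferentiableOn ℂ h (ball (0 : ℂ) 1))
    (hre : ∀ z ∈ ball (0 : ℂ) 1, 0 ≤ (h z).re) {L : ℝ}
    (hL : ∀ r ∈ Ioo (0 : ℝ) 1, L ≤ angularQuotient h r) {z : ℂ} (hz : z ∈ ball (0 : ℂ) 1) :
    0 ≤ (h z - L * ((1 + z) / (1 - z))).re := by
  rw [sub_re, re_ofReal_mul, re_one_add_div_one_sub, sub_nonneg, ← mul_div_assoc,
    div_le_iff₀ (normSq_pos.2 (one_sub_ne_zero_of_mem_ball hz))]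
  exact julia_inequality hhol hre hL hz

lemma angularQuotient_sub_mul_one_add_div_one_sub (L : ℝ) {r : ℝ} (hr : r ∈ Ioo (0 : ℝ) 1) :
    angularQuotient (fun z => h z - L * ((1 + z) / (1 - z))) r = angularQuotient h r - L := by
  have hr₁ : (1 : ℝ) - r ≠ 0 := by linarith [hr.2]
  have hr₂ : (1 : ℝ) + r ≠ 0 := by linarith [hr.1]
  have hreal : (1 + (r : ℂ)) / (1 - r) = ((1 + r) / (1 - r) : ℝ) := by push_cast; rfl
  simp only [angularQuotient, hreal, sub_re, ← ofReal_mul, ofReal_re]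
  field_simp

lemma normSq_one_sub_mul_sub_le (hhol : DifferentiableOn ℂ h (ball (0 : ℂ) 1))
    (hre : ∀ z ∈ ball (0 : ℂ) 1, 0 ≤ (h z).re) {r : ℝ} (hr : r ∈ Ioo (0 : ℝ) 1) :
    normSq (((1 - r : ℝ) : ℂ) * (h r - h 0)) ≤ 4 * (h 0).re * angularQuotient h r := by
  have h0 : (0 : ℂ) ∈ ball (0 : ℂ) 1 := mem_ball_self one_pos
  have key := normSq_sub_mul_le_re_mul_re hhol hre (ofReal_mem_ball_zero_one hr) h0
  simp only [normSq_zero, sub_zero, mul_one, normSq_ofReal] at key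
  have hU : 0 ≤ (h r).re := hre _ (ofReal_mem_ball_zero_one hr)
  have hV : 0 ≤ (h 0).re := hre 0 h0
  have hr₂ : (0 : ℝ) < 1 + r := by linarith [hr.1]
  have hq : (0 : ℝ) ≤ (1 - r) / (1 + r) := div_nonneg (by linarith [hr.2]) hr₂.le
  calc normSq (((1 - r : ℝ) : ℂ) * (h r - h 0))
      = (1 - r) / (1 + r) * (normSq (h r - h 0) * (1 - r * r)) := by
        rw [normSq_mul, normSq_ofReal]
        field_simp
        ring
    _ ≤ (1 - r) / (1 + r) * (4 * (h r).re * (h 0).re) := by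
        refine mul_le_mul_of_nonneg_left (key.trans (mul_le_of_le_one_right ?_ ?_)) hq
        · exact mul_nonneg (mul_nonneg zero_le_four hU) hV
        · nlinarith [hr.1, hr.2]
    _ = 4 * (h 0).re * angularQuotient h r := by
        unfold angularQuotient
        ring

theorem tendsto_one_sub_mul_nhds_zero (hhol : DifferentiableOn ℂ h (ball (0 : ℂ) 1))
    (hre : ∀ z ∈ ball (0 : ℂ) 1, 0 ≤ (h z).re)
    (hψ : Tendsto (angularQuotient h) (𝓝[<] 1) (𝓝 0)) :
    Tendsto (fun r : ℝ => ((1 - r : ℝ) : ℂ) * h r) (𝓝[<] 1) (𝓝 0) := by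
  have hbound : Tendsto (fun r => √(4 * (h 0).re * angularQuotient h r)) (𝓝[<] 1) (𝓝 0) := by
    simpa using (hψ.const_mul (4 * (h 0).re)).sqrt
  have hsub : Tendsto (fun r : ℝ => ((1 - r : ℝ) : ℂ) * (h r - h 0)) (𝓝[<] 1) (𝓝 0) := by
    refine squeeze_zero_norm' ?_ hbound
    filter_upwards [Ioo_mem_nhdsLT zero_lt_one] with r hr
    rw [norm_def]
    exact Real.sqrt_le_sqrt (normSq_one_sub_mul_sub_le hhol hre hr)
  have hconst : Tendsto (fun r : ℝ => ((1 - r : ℝ) : ℂ) * h 0) (𝓝[<] 1) (𝓝 0) := by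
    simpa using ((Continuous.tendsto (by fun_prop) 1 :
      Tendsto (fun r : ℝ => ((1 - r : ℝ) : ℂ) * h 0) _ _)).mono_left nhdsWithin_le_nhds
  simpa [mul_sub] using hsub.add hconst

end Extremal

theorem stmt7 (h : ℂ → ℂ)
    (hhol : DifferentiableOn ℂ h (ball (0 : ℂ) 1))
    (hre : ∀ z ∈ ball (0 : ℂ) 1, 0 ≤ (h z).re) :
    ∃ a : ℝ, 0 ≤ a ∧
      Tendsto (fun r : ℝ => ((1 - r : ℝ) : ℂ) * h (r : ℂ)) (𝓝[<] (1 : ℝ)) (𝓝 (a : ℂ)) := by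
  obtain ⟨L, hL₀, hL, hψ⟩ := exists_tendsto_angularQuotient hhol hre
  set H : ℂ → ℂ := fun z => h z - L * ((1 + z) / (1 - z))
  have hH_hol : DifferentiableOn ℂ H (ball (0 : ℂ) 1) :=
    hhol.sub (((differentiableOn_id.const_add 1).div (differentiableOn_id.const_sub 1)
      fun _ hz => one_sub_ne_zero_of_mem_ball hz).const_mul _)
  have hH_re : ∀ z ∈ ball (0 : ℂ) 1, 0 ≤ (H z).re := fun _ hz =>
    re_sub_mul_one_add_div_one_sub_nonneg hhol hre hL hz
  have hHψ : Tendsto (angularQuotient H) (𝓝[<] 1) (𝓝 0) := by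
    refine (sub_self L ▸ hψ.sub_const L).congr' ?_
    filter_upwards [Ioo_mem_nhdsLT zero_lt_one] with r hr
    exact (angularQuotient_sub_mul_one_add_div_one_sub L hr).symm
  have hlinear : Tendsto (fun r : ℝ => ((L * (1 + r) : ℝ) : ℂ)) (𝓝[<] 1) (𝓝 ((2 * L : ℝ) : ℂ)) := by
    have hcont : Continuous fun r : ℝ => ((L * (1 + r) : ℝ) : ℂ) := by fun_prop
    simpa [mul_comm, one_add_one_eq_two] using (hcont.tendsto 1).mono_left nhdsWithin_le_nhds
  refine ⟨2 * L, by positivity, ?_⟩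
  refine (zero_add ((2 * L : ℝ) : ℂ) ▸
    (tendsto_one_sub_mul_nhds_zero hH_hol hH_re hHψ).add hlinear).congr' ?_
  filter_upwards [Ioo_mem_nhdsLT zero_lt_one] with r hr
  have hr₁ : (1 : ℂ) - r ≠ 0 := one_sub_ne_zero_of_mem_ball (ofReal_mem_ball_zero_one hr)
  simp only [H]
  push_cast
  field_simp
  ring
end

section
/- Let H be a complex Hilbert space, B its open unit ball, τ ∈ H a unit vector, f : B → H a ρ-monotone mapping with strong radial limit lim_{r→1⁻} f(rτ) = 0, and {F_t}_{t≥0} a flow on B generated by f. If the limit α := lim_{r→1⁻} Re⟨f(rτ), τ⟩/(r−1) exists and α > 0, then for each t > 0 the mapping F_t has no fixed point in B, i.e., F_t(x) ≠ x for every x ∈ B. -/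
/-!
Along a trajectory `s ↦ F_s x` the function `L(x) = log (|1 - ⟨x, τ⟩|² / (1 - ‖x‖²))` decreases
at rate at least `α`. Indeed, letting `y = rτ` with `r → 1⁻` in the ρ-monotonicity inequality,
the hypotheses `f(rτ) → 0` and `Re⟨f(rτ), τ⟩ / (r - 1) → α` give
`Re (⟨f x, τ⟩ / (1 - ⟨x, τ⟩)) ≤ Re (⟨f x, x⟩ / (1 - ‖x‖²)) - α / 2`,
which is exactly `d/ds L(F_s x) ≤ -α`. Hence `L(F_t x) ≤ L(x) - α t < L(x)` for `t > 0`.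
-/

open Filter Metric Topology

open Set
open scoped InnerProductSpace ComplexConjugate

section

variable {E : Type*} [NormedAddCommGroup E]

theorem one_sub_norm_sq_pos {x : E} (hx : x ∈ ball (0 : E) 1) : 0 < 1 - ‖x‖ ^ 2 := by
  have := mem_ball_zero_iff.1 hx
  nlinarith [norm_nonneg x]

theorem re_div_one_sub_norm_sq (z : ℂ) (x : E) :
    (z / (1 - (‖x‖ : ℂ) ^ 2)).re = z.re / (1 - ‖x‖ ^ 2) := by
  rw [← Complex.div_ofReal_re]
  push_cast
  rfl

variable [InnerProductSpace ℂ E]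

theorem HasDerivWithinAt.norm_sq_complex {u : ℝ → E} {u' : E} {S : Set ℝ} {s : ℝ}
    (hu : HasDerivWithinAt u u' S s) :
    HasDerivWithinAt (fun s => ‖u s‖ ^ 2) (2 * (⟪u s, u'⟫_ℂ).re) S s := by
  have h := Complex.reCLM.hasFDerivAt.comp_hasDerivWithinAt s (hu.inner ℂ hu)
  have hnorm : (fun t => ‖u t‖ ^ 2) = fun t => Complex.reCLM ⟪u t, u t⟫_ℂ :=
    funext fun t => (inner_self_eq_norm_sq (𝕜 := ℂ) (u t)).symm
  rw [hnorm]
  refine h.congr_deriv ?_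
  rw [map_add, two_mul]
  congr 1
  exact inner_re_symm (𝕜 := ℂ) u' (u s)

theorem Complex.re_div_eq_re_conj_mul_div (z w : ℂ) :
    (z / w).re = (conj w * z).re / ‖w‖ ^ 2 := by
  rcases eq_or_ne w 0 with rfl | hw
  · simp
  rw [← Complex.div_ofReal_re, Complex.ofReal_pow, ← Complex.mul_conj', mul_comm w,
    mul_div_mul_left _ _ ((map_ne_zero _).2 hw)]

theorem one_sub_inner_ne_zero_s10 {τ x : E} (hτ : ‖τ‖ = 1) (hx : x ∈ ball (0 : E) 1) :
    1 - ⟪τ, x⟫_ℂ ≠ 0 := by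
  rw [sub_ne_zero]
  intro h
  have := norm_inner_le_norm (𝕜 := ℂ) τ x
  rw [← h, hτ, norm_one, one_mul] at this
  exact this.not_gt (mem_ball_zero_iff.1 hx)

theorem re_inner_smul_div_one_sub_norm_sq {τ : E} (hτ : ‖τ‖ = 1) (w : E) {r : ℝ} (hr1 : r ≠ 1)
    (hr2 : 1 + r ≠ 0) :
    (⟪w, (r : ℂ) • τ⟫_ℂ / (1 - (‖(r : ℂ) • τ‖ : ℂ) ^ 2)).re =
      -(r / (1 + r)) * ((⟪τ, w⟫_ℂ).re / (r - 1)) := by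
  have hsq : ‖(r : ℂ) • τ‖ ^ 2 = r ^ 2 := by
    rw [norm_smul, hτ, mul_one, Complex.norm_real, Real.norm_eq_abs, sq_abs]
  rw [re_div_one_sub_norm_sq, hsq, inner_smul_right, Complex.re_ofReal_mul,
    show (⟪w, τ⟫_ℂ).re = (⟪τ, w⟫_ℂ).re from inner_re_symm (𝕜 := ℂ) w τ]
  have h1 : r - 1 ≠ 0 := sub_ne_zero.2 hr1
  have h2 : 1 - r ^ 2 ≠ 0 := by
    rw [show 1 - r ^ 2 = -((r - 1) * (1 + r)) by ring]
    exact neg_ne_zero.2 (mul_ne_zero h1 hr2)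
  field_simp
  ring

end

section

variable {H : Type*} [NormedAddCommGroup H] [InnerProductSpace ℂ H] {τ : H} {f : H → H} {α : ℝ}

theorem tendsto_re_inner_div_one_sub_norm_sq_smul (hτ : ‖τ‖ = 1)
    (hα : Tendsto (fun r : ℝ => (⟪τ, f ((r : ℂ) • τ)⟫_ℂ).re / (r - 1))
      (𝓝[<] (1 : ℝ)) (𝓝 α)) :
    Tendsto (fun r : ℝ => (⟪f ((r : ℂ) • τ), (r : ℂ) • τ⟫_ℂ / (1 - (‖(r : ℂ) • τ‖ : ℂ) ^ 2)).re)
      (𝓝[<] 1) (𝓝 (-(α / 2))) := by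
  have hcoef : Tendsto (fun r : ℝ => -(r / (1 + r))) (𝓝[<] 1) (𝓝 (-(1 / 2))) := by
    have : ContinuousAt (fun r : ℝ => -(r / (1 + r))) 1 := by fun_prop (disch := norm_num)
    simpa [one_add_one_eq_two] using this.tendsto.mono_left nhdsWithin_le_nhds
  have hpos : ∀ᶠ r in 𝓝[<] (1 : ℝ), r ∈ Ioo 0 1 := Ioo_mem_nhdsLT one_pos
  have h := hcoef.mul hα
  rw [show -(1 / 2 : ℝ) * α = -(α / 2) by ring] at h
  refine h.congr' ?_
  filter_upwards [hpos] with r hr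
  rw [re_inner_smul_div_one_sub_norm_sq hτ _ hr.2.ne (by linarith [hr.1])]

theorem tendsto_re_inner_add_inner_div_one_sub_inner_smul (hτ : ‖τ‖ = 1)
    (hlim : Tendsto (fun r : ℝ => f ((r : ℂ) • τ)) (𝓝[<] (1 : ℝ)) (𝓝 (0 : H)))
    {x : H} (hx : x ∈ ball (0 : H) 1) :
    Tendsto (fun r : ℝ => ((⟪(r : ℂ) • τ, f x⟫_ℂ + ⟪f ((r : ℂ) • τ), x⟫_ℂ) /
        (1 - ⟪(r : ℂ) • τ, x⟫_ℂ)).re) (𝓝[<] 1) (𝓝 ((⟪τ, f x⟫_ℂ / (1 - ⟪τ, x⟫_ℂ)).re)) := by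
  have hr : Tendsto (fun r : ℝ => (r : ℂ) • τ) (𝓝[<] 1) (𝓝 τ) := by
    have : Continuous fun r : ℝ => (r : ℂ) • τ := by fun_prop
    simpa using (this.tendsto 1).mono_left nhdsWithin_le_nhds
  have h := ((hr.inner (tendsto_const_nhds (x := f x))).add
    (hlim.inner (tendsto_const_nhds (x := x)))).div
    ((tendsto_const_nhds (x := 1)).sub (hr.inner (tendsto_const_nhds (x := x))))
    (one_sub_inner_ne_zero_s10 hτ hx)
  simpa only [one_smul, inner_zero_left, add_zero, Function.comp_def, Pi.div_apply] using
    (Complex.continuous_re.tendsto _).comp h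

theorem RhoMonotone.re_inner_div_one_sub_inner_le (hmono : RhoMonotone f) (hτ : ‖τ‖ = 1)
    (hlim : Tendsto (fun r : ℝ => f ((r : ℂ) • τ)) (𝓝[<] (1 : ℝ)) (𝓝 (0 : H)))
    (hα : Tendsto (fun r : ℝ => (⟪τ, f ((r : ℂ) • τ)⟫_ℂ).re / (r - 1))
      (𝓝[<] (1 : ℝ)) (𝓝 α))
    {x : H} (hx : x ∈ ball (0 : H) 1) :
    (⟪τ, f x⟫_ℂ / (1 - ⟪τ, x⟫_ℂ)).re ≤ (⟪x, f x⟫_ℂ / (1 - (‖x‖ : ℂ) ^ 2)).re - α / 2 := by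
  have hball : ∀ᶠ r : ℝ in 𝓝[<] 1, (r : ℂ) • τ ∈ ball (0 : H) 1 := by
    filter_upwards [Ioo_mem_nhdsLT one_pos] with r hr
    rw [mem_ball_zero_iff, norm_smul, hτ, mul_one, Complex.norm_real, Real.norm_eq_abs,
      abs_of_pos hr.1]
    exact hr.2
  rw [sub_eq_add_neg]
  refine le_of_tendsto_of_tendsto (tendsto_re_inner_add_inner_div_one_sub_inner_smul hτ hlim hx)
    ((tendsto_const_nhds (x := (⟪x, f x⟫_ℂ / (1 - (‖x‖ : ℂ) ^ 2)).re)).add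
      (tendsto_re_inner_div_one_sub_norm_sq_smul hτ hα)) ?_
  filter_upwards [hball] with r hr
  simpa only [Complex.add_re] using hmono x hx _ hr

end

section

variable {E : Type*} [NormedAddCommGroup E] [InnerProductSpace ℂ E]

/-- Since `⟪τ, x⟫_ℂ` is the paper's `⟨x, τ⟩`, this is the logarithm of the horosphere function
`|1 - ⟨x, τ⟩|² / (1 - ‖x‖²)` of Julia's lemma. -/
noncomputable def horoLog (τ x : E) : ℝ :=
  Real.log (‖1 - ⟪τ, x⟫_ℂ‖ ^ 2) - Real.log (1 - ‖x‖ ^ 2)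

theorem HasDerivWithinAt.horoLog {τ : E} (hτ : ‖τ‖ = 1) {u : ℝ → E} {w : E} {S : Set ℝ}
    {s : ℝ} (hu : HasDerivWithinAt u (-w) S s) (hus : u s ∈ ball (0 : E) 1) :
    HasDerivWithinAt (fun s => horoLog τ (u s))
      (2 * ((⟪τ, w⟫_ℂ / (1 - ⟪τ, u s⟫_ℂ)).re - (⟪u s, w⟫_ℂ / (1 - (‖u s‖ : ℂ) ^ 2)).re)) S s := by
  have ha : HasDerivWithinAt (fun s => 1 - ⟪τ, u s⟫_ℂ) ⟪τ, w⟫_ℂ S s := by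
    simpa [inner_neg_right] using ((hasDerivWithinAt_const s S τ).inner ℂ hu).const_sub 1
  have hnum := ha.norm_sq_complex.log
    (pow_ne_zero 2 (norm_ne_zero_iff.2 (one_sub_inner_ne_zero_s10 hτ hus)))
  have hden := (hu.norm_sq_complex.const_sub 1).log (one_sub_norm_sq_pos hus).ne'
  refine (hnum.sub hden).congr_deriv ?_
  rw [re_div_one_sub_norm_sq, Complex.re_div_eq_re_conj_mul_div, inner_neg_right, Complex.neg_re]
  simp only [RCLike.inner_apply']
  ring

end

theorem le_sub_mul_of_hasDerivWithinAt_le {φ φ' : ℝ → ℝ} {a b c : ℝ} (hab : a ≤ b)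
    (hφ : ∀ s ≥ a, HasDerivWithinAt φ (φ' s) (Ici a) s) (hle : ∀ s ≥ a, φ' s ≤ -c) :
    φ b ≤ φ a - c * (b - a) := by
  refine image_le_of_deriv_right_le_deriv_boundary (f' := φ') (B := fun s => φ a - c * (s - a))
    (B' := fun _ => -c)
    (fun s hs => ((hφ s hs.1).continuousWithinAt).mono Icc_subset_Ici_self)
    (fun s hs => (hφ s hs.1).mono (Ici_subset_Ici.2 hs.1)) (by simp) (by fun_prop)
    (fun s _ => ?_) (fun s hs => hle s hs.1) ⟨hab, le_rfl⟩
  simpa using ((hasDerivWithinAt_id s _).sub_const a).const_mul c |>.const_sub (φ a)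

theorem stmt10_general {H : Type*} [NormedAddCommGroup H] [InnerProductSpace ℂ H]
    (τ : H) (hτ : ‖τ‖ = 1) (f : H → H) (F : ℝ → H → H) (α : ℝ)
    (hmono : RhoMonotone f)
    (hlim : Tendsto (fun r : ℝ => f ((r : ℂ) • τ)) (𝓝[<] (1 : ℝ)) (𝓝 (0 : H)))
    (hF0 : ∀ x ∈ ball (0 : H) 1, F 0 x = x)
    (hFmaps : ∀ t ≥ (0 : ℝ), ∀ x ∈ ball (0 : H) 1, F t x ∈ ball (0 : H) 1)
    (hFderiv : ∀ x ∈ ball (0 : H) 1, ∀ t ≥ (0 : ℝ),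
      HasDerivWithinAt (fun s => F s x) (-(f (F t x))) (Set.Ici (0 : ℝ)) t)
    (hα : Tendsto (fun r : ℝ => (inner ℂ τ (f ((r : ℂ) • τ)) : ℂ).re / (r - 1))
      (𝓝[<] (1 : ℝ)) (𝓝 α))
    (hαpos : 0 < α) :
    ∀ t > (0 : ℝ), ∀ x ∈ ball (0 : H) 1, F t x ≠ x := by
  intro t ht x hx hfix
  have hdecay := le_sub_mul_of_hasDerivWithinAt_le ht.le
    (φ := fun s => horoLog τ (F s x)) (c := α)
    (fun s hs => (hFderiv x hx s hs).horoLog hτ (hFmaps s hs x hx))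
    (fun s hs => by linarith [hmono.re_inner_div_one_sub_inner_le hτ hlim hα (hFmaps s hs x hx)])
  simp only [hfix, hF0 x hx, sub_zero] at hdecay
  nlinarith

theorem stmt10 {H : Type*} [NormedAddCommGroup H] [InnerProductSpace ℂ H] [CompleteSpace H]
    (τ : H) (hτ : ‖τ‖ = 1) (f : H → H) (F : ℝ → H → H) (α : ℝ)
    (hmono : RhoMonotone f)
    (hlim : Tendsto (fun r : ℝ => f ((r : ℂ) • τ)) (𝓝[<] (1 : ℝ)) (𝓝 (0 : H)))
    (hF0 : ∀ x ∈ ball (0 : H) 1, F 0 x = x)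
    (hFsemigroup : ∀ t ≥ (0 : ℝ), ∀ s ≥ (0 : ℝ), ∀ x ∈ ball (0 : H) 1,
      F (t + s) x = F t (F s x))
    (hFmaps : ∀ t ≥ (0 : ℝ), ∀ x ∈ ball (0 : H) 1, F t x ∈ ball (0 : H) 1)
    (hFderiv : ∀ x ∈ ball (0 : H) 1, ∀ t ≥ (0 : ℝ),
      HasDerivWithinAt (fun s => F s x) (-(f (F t x))) (Set.Ici (0 : ℝ)) t)
    (hα : Tendsto (fun r : ℝ => (inner ℂ τ (f ((r : ℂ) • τ)) : ℂ).re / (r - 1))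
      (𝓝[<] (1 : ℝ)) (𝓝 α))
    (hαpos : 0 < α) :
    ∀ t > (0 : ℝ), ∀ x ∈ ball (0 : H) 1, F t x ≠ x :=
  stmt10_general τ hτ f F α hmono hlim hF0 hFmaps hFderiv hα hαpos
end

section
/- Let χ ∈ ℝ with χ ≥ 1, and for t ≥ 0 define F_t : ℂ → ℂ by F_t(z) = 1 − e^{−t} + e^{−t}·(z + z̄)/2 + e^{−χt}·(z − z̄)/2. Then for each t ≥ 0: (i) F_t maps the closed unit disk {z : |z| ≤ 1} into itself; (ii) F_t(1) = 1; (iii) F_t restricted to the open unit disk Δ is nonexpansive with respect to the Poincaré hyperbolic metric, i.e., ρ(F_t(z), F_t(w)) ≤ ρ(z, w) for all z, w ∈ Δ; and (iv) for every z with |z| ≤ 1, lim_{t→∞} F_t(z) = 1. -/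
open Filter Topology

/-- The inverse hyperbolic tangent, `artanh x = ½ log((1+x)/(1-x))`. -/
noncomputable def artanh (x : ℝ) : ℝ := (1 / 2) * Real.log ((1 + x) / (1 - x))

/-- The Poincaré hyperbolic metric on the open unit disk:
`ρ(z,w) = artanh |(z - w)/(1 - w̄ z)|`. -/
noncomputable def poincareDist (z w : ℂ) : ℝ :=
  artanh (‖(z - w) / (1 - starRingEnd ℂ w * z)‖)

/-
Write `a = e^{-t}` and `c = e^{-(χ-1)t} ≤ 1`. Then `F_t = T ∘ S`, where `S(x + iy) = x + icy`
squeezes the imaginary part and `T(z) = 1 - a + az` is the homothety of ratio `a` centred at `1`.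
Both maps send the disk into itself and do not increase the pseudo-hyperbolic distance
`|z - w| / |1 - w̄z|`: for `T` this is Schwarz–Pick, for the non-holomorphic `S` it is a
sum-of-squares identity in the coordinates of `z` and `w`. Since `artanh` is increasing,
`F_t` is nonexpansive for `ρ`. The limit `F_t(z) → 1` holds because `a, e^{-χt} → 0`.
-/

open Complex ComplexConjugate

lemma artanh_le_artanh {s r : ℝ} (hs : -1 < s) (hsr : s ≤ r) (hr : r < 1) :
    artanh s ≤ artanh r := by
  unfold artanh
  have hr' : 0 < 1 - r := by linarith
  gcongr
  · exact div_pos (by linarith) (by linarith)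
  · linarith

noncomputable def pseudoHyperbolicDist (z w : ℂ) : ℝ := ‖(z - w) / (1 - conj w * z)‖

lemma normSq_one_sub_conj_mul (z w : ℂ) :
    normSq (1 - conj w * z) = normSq (z - w) + (1 - normSq z) * (1 - normSq w) := by
  simp only [normSq_apply, sub_re, sub_im, mul_re, mul_im, one_re, one_im, conj_re, conj_im]
  ring

lemma normSq_lt_one {z : ℂ} (hz : ‖z‖ < 1) : normSq z < 1 := by
  rw [normSq_eq_norm_sq]
  exact pow_lt_one₀ (norm_nonneg z) hz two_ne_zero

lemma one_sub_conj_mul_ne_zero {z w : ℂ} (hz : ‖z‖ < 1) (hw : ‖w‖ ≤ 1) : 1 - conj w * z ≠ 0 := by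
  have h : ‖conj w * z‖ < 1 := by
    simpa [norm_mul] using mul_lt_one_of_nonneg_of_lt_one_right hw (norm_nonneg z) hz
  intro h0
  rw [← sub_eq_zero.1 h0, norm_one] at h
  exact lt_irrefl 1 h

lemma pseudoHyperbolicDist_lt_one {z w : ℂ} (hz : ‖z‖ < 1) (hw : ‖w‖ < 1) :
    pseudoHyperbolicDist z w < 1 := by
  rw [pseudoHyperbolicDist, norm_div,
    div_lt_one (norm_pos_iff.2 (one_sub_conj_mul_ne_zero hz hw.le)),
    ← sq_lt_sq₀ (norm_nonneg _) (norm_nonneg _), Complex.sq_norm, Complex.sq_norm,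
    normSq_one_sub_conj_mul]
  have := mul_pos (sub_pos.2 (normSq_lt_one hz)) (sub_pos.2 (normSq_lt_one hw))
  linarith

lemma pseudoHyperbolicDist_le_of_normSq_mul_le {z w z' w' : ℂ}
    (hD : 1 - conj w * z ≠ 0) (hD' : 1 - conj w' * z' ≠ 0)
    (h : normSq (z' - w') * normSq (1 - conj w * z)
      ≤ normSq (z - w) * normSq (1 - conj w' * z')) :
    pseudoHyperbolicDist z' w' ≤ pseudoHyperbolicDist z w := by
  rw [pseudoHyperbolicDist, pseudoHyperbolicDist, ← sq_le_sq₀ (norm_nonneg _) (norm_nonneg _),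
    Complex.sq_norm, Complex.sq_norm, normSq_div, normSq_div,
    div_le_div_iff₀ (normSq_pos.2 hD') (normSq_pos.2 hD)]
  exact h

lemma homothety_one_apply (a : ℝ) (z : ℂ) :
    AffineMap.homothety (1 : ℂ) (a : ℂ) z = (1 - a : ℝ) + a * z := by
  simp only [AffineMap.homothety_apply, vsub_eq_sub, vadd_eq_add, smul_eq_mul, ofReal_sub,
    ofReal_one]
  ring

lemma norm_homothety_one_le {a : ℝ} (ha0 : 0 ≤ a) (ha1 : a ≤ 1) (z : ℂ) :
    ‖AffineMap.homothety (1 : ℂ) (a : ℂ) z‖ ≤ 1 - a + a * ‖z‖ := by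
  rw [homothety_one_apply]
  calc ‖((1 - a : ℝ) : ℂ) + a * z‖ ≤ ‖((1 - a : ℝ) : ℂ)‖ + ‖(a : ℂ) * z‖ := norm_add_le _ _
    _ = 1 - a + a * ‖z‖ := by
      rw [norm_mul, norm_real, norm_real, Real.norm_of_nonneg (sub_nonneg.2 ha1),
        Real.norm_of_nonneg ha0]

lemma sq_mul_normSq_one_sub_conj_mul_le_homothety_one {a : ℝ} (ha1 : a ≤ 1)
    {z w : ℂ} (hz : normSq z ≤ 1) (hw : normSq w ≤ 1) :
    a ^ 2 * normSq (1 - conj w * z) ≤ normSq (1 - conj (AffineMap.homothety (1 : ℂ) (a : ℂ) w)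
        * AffineMap.homothety (1 : ℂ) (a : ℂ) z) := by
  -- With `T = homothety 1 a`, `1 - conj (T w) * T z = a * (A + (1 - a) * B)` where
  -- `A = 1 - conj w * z`, `B = (1 - z) * (1 - conj w)`, and
  -- `2 * re (A * conj B) = |1 - w|² (1 - |z|²) + |1 - z|² (1 - |w|²) ≥ 0`.
  have key : normSq (1 - conj (AffineMap.homothety (1 : ℂ) (a : ℂ) w)
        * AffineMap.homothety (1 : ℂ) (a : ℂ) z)
      = a ^ 2 * (normSq (1 - conj w * z) + (1 - a) * (normSq (1 - w) * (1 - normSq z)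
        + normSq (1 - z) * (1 - normSq w)) + (1 - a) ^ 2 * (normSq (1 - z) * normSq (1 - w))) := by
    simp only [homothety_one_apply, normSq_apply, sub_re, sub_im, mul_re, mul_im, one_re, one_im,
      conj_re, conj_im, add_re, add_im, ofReal_re, ofReal_im]
    ring
  have hs := sub_nonneg.2 ha1
  have hp := sub_nonneg.2 hz
  have hq := sub_nonneg.2 hw
  have hz1 := normSq_nonneg (1 - z)
  have hw1 := normSq_nonneg (1 - w)
  rw [key, add_assoc]
  gcongr
  exact le_add_of_nonneg_right (by bound)

lemma pseudoHyperbolicDist_homothety_one_le {a : ℝ} (ha0 : 0 < a) (ha1 : a ≤ 1) {z w : ℂ}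
    (hz : ‖z‖ < 1) (hw : ‖w‖ < 1) :
    pseudoHyperbolicDist (AffineMap.homothety (1 : ℂ) (a : ℂ) z)
      (AffineMap.homothety (1 : ℂ) (a : ℂ) w) ≤ pseudoHyperbolicDist z w := by
  have hT : ∀ z : ℂ, ‖z‖ < 1 → ‖AffineMap.homothety (1 : ℂ) (a : ℂ) z‖ < 1 := fun z hz => by
    nlinarith [norm_homothety_one_le ha0.le ha1 z]
  refine pseudoHyperbolicDist_le_of_normSq_mul_le (one_sub_conj_mul_ne_zero hz hw.le)
    (one_sub_conj_mul_ne_zero (hT z hz) (hT w hw).le) ?_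
  have hdiff : AffineMap.homothety (1 : ℂ) (a : ℂ) z - AffineMap.homothety (1 : ℂ) (a : ℂ) w
      = a * (z - w) := by
    rw [homothety_one_apply, homothety_one_apply]; ring
  rw [hdiff, normSq_mul, normSq_ofReal]
  calc a * a * normSq (z - w) * normSq (1 - conj w * z)
      = normSq (z - w) * (a ^ 2 * normSq (1 - conj w * z)) := by ring
    _ ≤ _ := mul_le_mul_of_nonneg_left (sq_mul_normSq_one_sub_conj_mul_le_homothety_one
      ha1 (normSq_lt_one hz).le (normSq_lt_one hw).le) (normSq_nonneg _)

def scaleIm (c : ℝ) (z : ℂ) : ℂ := ⟨z.re, c * z.im⟩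

lemma scaleIm_one (c : ℝ) : scaleIm c 1 = 1 := by
  apply Complex.ext <;> simp [scaleIm]

lemma norm_scaleIm_le {c : ℝ} (hc : |c| ≤ 1) (z : ℂ) : ‖scaleIm c z‖ ≤ ‖z‖ := by
  have hc2 : c ^ 2 ≤ 1 := (sq_le_one_iff_abs_le_one c).2 hc
  rw [← sq_le_sq₀ (norm_nonneg _) (norm_nonneg _), Complex.sq_norm, Complex.sq_norm,
    normSq_apply, normSq_apply, scaleIm]
  nlinarith [mul_le_mul_of_nonneg_right hc2 (sq_nonneg z.im)]

lemma normSq_scaleIm_mul_le {c : ℝ} (hc : |c| ≤ 1) {z w : ℂ} (hz : normSq z ≤ 1)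
    (hw : normSq w ≤ 1) :
    normSq (scaleIm c z - scaleIm c w) * normSq (1 - conj w * z)
      ≤ normSq (z - w) * normSq (1 - conj (scaleIm c w) * scaleIm c z) := by
  have key : normSq (z - w) * normSq (1 - conj (scaleIm c w) * scaleIm c z)
      = normSq (scaleIm c z - scaleIm c w) * normSq (1 - conj w * z)
        + (1 - c ^ 2) * ((z.re - w.re) ^ 2 * w.im ^ 2 * (1 - normSq z)
          + (z.re - w.re) ^ 2 * z.im ^ 2 * (1 - normSq w)
          + (z.im - w.im) ^ 2 * (1 - normSq z) * (1 - normSq w)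
          + (z.im - w.im) ^ 2 * (1 - normSq z) * w.im ^ 2
          + (z.im - w.im) ^ 2 * (1 - normSq w) * z.im ^ 2)
        + (1 - c ^ 2) ^ 2 * (z.im ^ 2 * w.im ^ 2 * normSq (z - w)) := by
    simp only [scaleIm, normSq_apply, sub_re, sub_im, mul_re, mul_im, one_re, one_im,
      conj_re, conj_im]
    ring
  have hd := sub_nonneg.2 ((sq_le_one_iff_abs_le_one c).2 hc)
  have hp := sub_nonneg.2 hz
  have hq := sub_nonneg.2 hw
  have hzw := normSq_nonneg (z - w)
  rw [key, add_assoc]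
  apply le_add_of_nonneg_right
  bound

lemma pseudoHyperbolicDist_scaleIm_le {c : ℝ} (hc : |c| ≤ 1) {z w : ℂ}
    (hz : ‖z‖ < 1) (hw : ‖w‖ < 1) :
    pseudoHyperbolicDist (scaleIm c z) (scaleIm c w) ≤ pseudoHyperbolicDist z w :=
  pseudoHyperbolicDist_le_of_normSq_mul_le (one_sub_conj_mul_ne_zero hz hw.le)
    (one_sub_conj_mul_ne_zero ((norm_scaleIm_le hc z).trans_lt hz)
      ((norm_scaleIm_le hc w).trans hw.le))
    (normSq_scaleIm_mul_le hc (normSq_lt_one hz).le (normSq_lt_one hw).le)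

noncomputable def flow (χ t : ℝ) (z : ℂ) : ℂ :=
  AffineMap.homothety (1 : ℂ) (Real.exp (-t) : ℂ) (scaleIm (Real.exp (-((χ - 1) * t))) z)

lemma flow_eq (χ t : ℝ) (z : ℂ) :
    flow χ t z = 1 - (Real.exp (-t) : ℝ) + ((Real.exp (-t) : ℝ) : ℂ) * ((z + conj z) / 2)
      + ((Real.exp (-(χ * t)) : ℝ) : ℂ) * ((z - conj z) / 2) := by
  have hexp : Real.exp (-t) * Real.exp (-((χ - 1) * t)) = Real.exp (-(χ * t)) := by
    rw [← Real.exp_add]; ring_nf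
  rw [flow, homothety_one_apply, scaleIm, mk_eq_add_mul_I, add_conj, sub_conj, ← hexp]
  push_cast
  ring

lemma flow_one (χ t : ℝ) : flow χ t 1 = 1 := by
  rw [flow, scaleIm_one, AffineMap.homothety_apply_same]

lemma abs_exp_neg_sub_one_mul_le_one {χ t : ℝ} (hχ : 1 ≤ χ) (ht : 0 ≤ t) :
    |Real.exp (-((χ - 1) * t))| ≤ 1 := by
  rw [abs_of_pos (Real.exp_pos _), Real.exp_le_one_iff, neg_nonpos]
  exact mul_nonneg (sub_nonneg.2 hχ) ht

lemma norm_flow_le_one {χ t : ℝ} (hχ : 1 ≤ χ) (ht : 0 ≤ t) {z : ℂ} (hz : ‖z‖ ≤ 1) :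
    ‖flow χ t z‖ ≤ 1 := by
  have ha1 : Real.exp (-t) ≤ 1 := Real.exp_le_one_iff.2 (neg_nonpos.2 ht)
  have hS := (norm_scaleIm_le (abs_exp_neg_sub_one_mul_le_one hχ ht) z).trans hz
  have hT := norm_homothety_one_le (Real.exp_pos (-t)).le ha1
    (scaleIm (Real.exp (-((χ - 1) * t))) z)
  rw [flow]
  nlinarith [Real.exp_pos (-t)]

lemma poincareDist_flow_le {χ t : ℝ} (hχ : 1 ≤ χ) (ht : 0 ≤ t) {z w : ℂ}
    (hz : ‖z‖ < 1) (hw : ‖w‖ < 1) :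
    poincareDist (flow χ t z) (flow χ t w) ≤ poincareDist z w := by
  have hc := abs_exp_neg_sub_one_mul_le_one hχ ht
  have hST := pseudoHyperbolicDist_homothety_one_le (Real.exp_pos (-t))
    (Real.exp_le_one_iff.2 (neg_nonpos.2 ht)) ((norm_scaleIm_le hc z).trans_lt hz)
    ((norm_scaleIm_le hc w).trans_lt hw)
  exact artanh_le_artanh (neg_one_lt_zero.trans_le (norm_nonneg _))
    (hST.trans (pseudoHyperbolicDist_scaleIm_le hc hz hw)) (pseudoHyperbolicDist_lt_one hz hw)

lemma tendsto_flow_atTop {χ : ℝ} (hχ : 0 < χ) (z : ℂ) :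
    Tendsto (fun t => flow χ t z) atTop (𝓝 1) := by
  have hexp : ∀ {k : ℝ}, 0 < k →
      Tendsto (fun t : ℝ => ((Real.exp (-(k * t)) : ℝ) : ℂ)) atTop (𝓝 0) := fun hk => by
    simpa only [Function.comp_def, id, ofReal_zero] using
      (continuous_ofReal.tendsto 0).comp (Real.tendsto_exp_atBot.comp
        (tendsto_neg_atTop_atBot.comp (tendsto_id.const_mul_atTop hk)))
  have h := (((tendsto_const_nhds (x := (1 : ℂ))).sub (hexp one_pos)).add
    ((hexp one_pos).mul (tendsto_const_nhds (x := (z + conj z) / 2)))).add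
    ((hexp hχ).mul (tendsto_const_nhds (x := (z - conj z) / 2)))
  simp only [one_mul, sub_zero, zero_mul, add_zero] at h
  simpa only [flow_eq] using h

theorem stmt12 (χ : ℝ) (hχ : (1 : ℝ) ≤ χ)
    (F : ℝ → ℂ → ℂ)
    (hF : ∀ t ≥ (0 : ℝ), ∀ z : ℂ,
      F t z = 1 - (Real.exp (-t) : ℝ) + ((Real.exp (-t) : ℝ) : ℂ) * ((z + starRingEnd ℂ z) / 2)
        + ((Real.exp (-(χ * t)) : ℝ) : ℂ) * ((z - starRingEnd ℂ z) / 2)) :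
    (∀ t ≥ (0 : ℝ),
      (∀ z : ℂ, ‖z‖ ≤ 1 → ‖F t z‖ ≤ 1) ∧
      F t 1 = 1 ∧
      (∀ z w : ℂ, ‖z‖ < 1 → ‖w‖ < 1 →
        poincareDist (F t z) (F t w) ≤ poincareDist z w)) ∧
    (∀ z : ℂ, ‖z‖ ≤ 1 → Tendsto (fun t : ℝ => F t z) atTop (𝓝 1)) := by
  have hFflow : ∀ t ≥ (0 : ℝ), F t = flow χ t := fun t ht =>
    funext fun z => (hF t ht z).trans (flow_eq χ t z).symm
  refine ⟨fun t ht => ?_, fun z _ => ?_⟩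
  · rw [hFflow t ht]
    exact ⟨fun _ => norm_flow_le_one hχ ht, flow_one χ t,
      fun _ _ => poincareDist_flow_le hχ ht⟩
  · refine (tendsto_flow_atTop (zero_lt_one.trans_le hχ) z).congr' ?_
    filter_upwards [eventually_ge_atTop 0] with t ht
    rw [hFflow t ht]
end

section
/- Let H₁ be a complex Hilbert space, H = ℂ × H₁ with the product Hilbert space structure, and B = {(z₁, z₂) ∈ H : |z₁|² + ‖z₂‖² < 1}. For t ≥ 0 define F_t(z₁, z₂) = ( z₁/(z₁ + e^t(1 − z₁)), e^{t/2} z₂/(z₁ + e^t(1 − z₁)) ), and let τ = (1, 0) ∈ H. Then for every t ≥ 0 and every (z₁, z₂) ∈ B, the denominator z₁ + e^t(1 − z₁) is nonzero, F_t(z₁, z₂) ∈ B, and d_τ(F_t(z₁, z₂)) ≤ e^{t} · d_τ(z₁, z₂). -/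
/-- The non-Euclidean "distance" `d_τ(z₁,z₂) = |1 - ⟨(z₁,z₂),τ⟩|²/(1 - ‖(z₁,z₂)‖²)` to the
boundary point `τ = (1,0)` of the unit ball of the product Hilbert space `ℂ × H₁`:
here `⟨(z₁,z₂),(1,0)⟩ = z₁` and `‖(z₁,z₂)‖² = |z₁|² + ‖z₂‖²`. -/
noncomputable def dtauProd {H₁ : Type*} [NormedAddCommGroup H₁] [InnerProductSpace ℂ H₁]
    (z₁ : ℂ) (z₂ : H₁) : ℝ :=
  ‖1 - z₁‖ ^ 2 / (1 - ‖z₁‖ ^ 2 - ‖z₂‖ ^ 2)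

/-!
Write `E = eᵗ ≥ 1` and `w = z₁ + E (1 - z₁)`. Expanding `|w|²` gives the identity
`|w|² - |z₁|² - E ‖z₂‖² = E (1 - |z₁|² - ‖z₂‖²) + E (E - 1) |1 - z₁|²`,
whose right-hand side is positive on the ball. Dividing by `|w|²` shows that `F_t` maps the ball
into itself, and since `1 - z₁ / w = E (1 - z₁) / w`, the new value of `d_τ` is
`E² |1 - z₁|² / (E (1 - |z₁|² - ‖z₂‖²) + E (E - 1) |1 - z₁|²) ≤ E d_τ(z₁, z₂)`.
-/

lemma Complex.norm_sq_add_mul_one_sub (E : ℝ) (z : ℂ) :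
    ‖z + E * (1 - z)‖ ^ 2 = ‖z‖ ^ 2 + E * (1 - ‖z‖ ^ 2) + E * (E - 1) * ‖1 - z‖ ^ 2 := by
  simp only [Complex.sq_norm, Complex.normSq_apply, Complex.add_re, Complex.add_im,
    Complex.mul_re, Complex.mul_im, Complex.sub_re, Complex.sub_im, Complex.one_re,
    Complex.one_im, Complex.ofReal_re, Complex.ofReal_im]
  ring

lemma Complex.one_sub_div_add_mul_one_sub {E : ℝ} {z : ℂ} (hw : z + E * (1 - z) ≠ 0) :
    1 - z / (z + E * (1 - z)) = E * (1 - z) / (z + E * (1 - z)) := by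
  field_simp
  ring

lemma Complex.add_mul_one_sub_ne_zero {E : ℝ} {z : ℂ} (hE : 1 ≤ E) (hz : ‖z‖ < 1) :
    z + E * (1 - z) ≠ 0 := by
  have hpos : 0 < ‖z + E * (1 - z)‖ ^ 2 := by
    rw [Complex.norm_sq_add_mul_one_sub]
    have : 0 < 1 - ‖z‖ ^ 2 := by nlinarith [norm_nonneg z]
    positivity
  intro h
  simp [h] at hpos

lemma norm_lt_one_of_norm_sq_add_norm_sq_lt_one {V : Type*} [SeminormedAddCommGroup V] {z : ℂ}
    {v : V} (h : ‖z‖ ^ 2 + ‖v‖ ^ 2 < 1) : ‖z‖ < 1 :=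
  (sq_lt_one_iff₀ (norm_nonneg _)).mp (by nlinarith [sq_nonneg ‖v‖])

lemma norm_sq_div_smul {V : Type*} [NormedAddCommGroup V] [NormedSpace ℂ V] (a w : ℂ) (v : V) :
    ‖(a / w) • v‖ ^ 2 = ‖a‖ ^ 2 * ‖v‖ ^ 2 / ‖w‖ ^ 2 := by
  rw [norm_smul, norm_div]
  ring

section

variable {H₁ : Type*} [NormedAddCommGroup H₁] [NormedSpace ℂ H₁]
  {E : ℝ} {a z₁ : ℂ} {z₂ : H₁}

lemma one_sub_norm_sq_image (ha : ‖a‖ ^ 2 = E) (hw : z₁ + E * (1 - z₁) ≠ 0) :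
    1 - ‖z₁ / (z₁ + E * (1 - z₁))‖ ^ 2 - ‖(a / (z₁ + E * (1 - z₁))) • z₂‖ ^ 2 =
      (E * (1 - ‖z₁‖ ^ 2 - ‖z₂‖ ^ 2) + E * (E - 1) * ‖1 - z₁‖ ^ 2) /
        ‖z₁ + E * (1 - z₁)‖ ^ 2 := by
  have hw2 : ‖z₁ + E * (1 - z₁)‖ ^ 2 ≠ 0 := by positivity
  rw [norm_sq_div_smul, norm_div, div_pow, ha, eq_div_iff hw2]
  field_simp
  rw [Complex.norm_sq_add_mul_one_sub]
  ring

lemma norm_sq_image_lt_one (hE : 1 ≤ E) (ha : ‖a‖ ^ 2 = E) (hz : ‖z₁‖ ^ 2 + ‖z₂‖ ^ 2 < 1) :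
    ‖z₁ / (z₁ + E * (1 - z₁))‖ ^ 2 + ‖(a / (z₁ + E * (1 - z₁))) • z₂‖ ^ 2 < 1 := by
  have hw := Complex.add_mul_one_sub_ne_zero hE (norm_lt_one_of_norm_sq_add_norm_sq_lt_one hz)
  have hS : 0 < 1 - ‖z₁‖ ^ 2 - ‖z₂‖ ^ 2 := by linarith
  have hE₁ : 0 ≤ E - 1 := by linarith
  have hgap := one_sub_norm_sq_image (z₂ := z₂) ha hw
  have : 0 < 1 - ‖z₁ / (z₁ + E * (1 - z₁))‖ ^ 2 - ‖(a / (z₁ + E * (1 - z₁))) • z₂‖ ^ 2 := by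
    rw [hgap]
    positivity
  linarith

end

lemma dtauProd_image_le {H₁ : Type*} [NormedAddCommGroup H₁] [InnerProductSpace ℂ H₁]
    {E : ℝ} {a z₁ : ℂ} {z₂ : H₁} (hE : 1 ≤ E) (ha : ‖a‖ ^ 2 = E)
    (hz : ‖z₁‖ ^ 2 + ‖z₂‖ ^ 2 < 1) :
    dtauProd (z₁ / (z₁ + E * (1 - z₁))) ((a / (z₁ + E * (1 - z₁))) • z₂) ≤
      E * dtauProd z₁ z₂ := by
  have hw := Complex.add_mul_one_sub_ne_zero hE (norm_lt_one_of_norm_sq_add_norm_sq_lt_one hz)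
  have hw2 : 0 < ‖z₁ + E * (1 - z₁)‖ ^ 2 := by positivity
  have hS : 0 < 1 - ‖z₁‖ ^ 2 - ‖z₂‖ ^ 2 := by linarith
  have hE₀ : 0 < E := by linarith
  have hE₁ : 0 ≤ E - 1 := by linarith
  unfold dtauProd
  rw [one_sub_norm_sq_image ha hw, Complex.one_sub_div_add_mul_one_sub hw, norm_div, norm_mul,
    Complex.norm_real, Real.norm_of_nonneg hE₀.le, div_pow, div_div_div_cancel_right₀ hw2.ne']
  calc (E * ‖1 - z₁‖) ^ 2 / (E * (1 - ‖z₁‖ ^ 2 - ‖z₂‖ ^ 2) + E * (E - 1) * ‖1 - z₁‖ ^ 2)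
      ≤ (E * ‖1 - z₁‖) ^ 2 / (E * (1 - ‖z₁‖ ^ 2 - ‖z₂‖ ^ 2)) := by
        gcongr
        exact le_add_of_nonneg_right (by positivity)
    _ = E * (‖1 - z₁‖ ^ 2 / (1 - ‖z₁‖ ^ 2 - ‖z₂‖ ^ 2)) := by
      field_simp

theorem stmt13_general {H₁ : Type*} [NormedAddCommGroup H₁] [InnerProductSpace ℂ H₁]
    (t : ℝ) (ht : 0 ≤ t) (z₁ : ℂ) (z₂ : H₁)
    (hz : ‖z₁‖ ^ 2 + ‖z₂‖ ^ 2 < 1) :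
    z₁ + ((Real.exp t : ℝ) : ℂ) * (1 - z₁) ≠ 0 ∧
    ‖z₁ / (z₁ + ((Real.exp t : ℝ) : ℂ) * (1 - z₁))‖ ^ 2 +
      ‖((((Real.exp (t / 2) : ℝ) : ℂ) / (z₁ + ((Real.exp t : ℝ) : ℂ) * (1 - z₁))) • z₂)‖ ^ 2
      < 1 ∧
    dtauProd (z₁ / (z₁ + ((Real.exp t : ℝ) : ℂ) * (1 - z₁)))
        ((((Real.exp (t / 2) : ℝ) : ℂ) / (z₁ + ((Real.exp t : ℝ) : ℂ) * (1 - z₁))) • z₂) ≤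
      Real.exp t * dtauProd z₁ z₂ := by
  have hE : 1 ≤ Real.exp t := Real.one_le_exp ht
  have ha : ‖((Real.exp (t / 2) : ℝ) : ℂ)‖ ^ 2 = Real.exp t := by
    rw [Complex.norm_real, Real.norm_of_nonneg (Real.exp_pos _).le, ← Real.exp_nat_mul]
    congr 1
    ring
  exact ⟨Complex.add_mul_one_sub_ne_zero hE (norm_lt_one_of_norm_sq_add_norm_sq_lt_one hz),
    norm_sq_image_lt_one hE ha hz, dtauProd_image_le hE ha hz⟩

theorem stmt13 {H₁ : Type*} [NormedAddCommGroup H₁] [InnerProductSpace ℂ H₁] [CompleteSpace H₁]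
    (t : ℝ) (ht : 0 ≤ t) (z₁ : ℂ) (z₂ : H₁)
    (hz : ‖z₁‖ ^ 2 + ‖z₂‖ ^ 2 < 1) :
    z₁ + ((Real.exp t : ℝ) : ℂ) * (1 - z₁) ≠ 0 ∧
    ‖z₁ / (z₁ + ((Real.exp t : ℝ) : ℂ) * (1 - z₁))‖ ^ 2 +
      ‖((((Real.exp (t / 2) : ℝ) : ℂ) / (z₁ + ((Real.exp t : ℝ) : ℂ) * (1 - z₁))) • z₂)‖ ^ 2
      < 1 ∧
    dtauProd (z₁ / (z₁ + ((Real.exp t : ℝ) : ℂ) * (1 - z₁)))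
        ((((Real.exp (t / 2) : ℝ) : ℂ) / (z₁ + ((Real.exp t : ℝ) : ℂ) * (1 - z₁))) • z₂) ≤
      Real.exp t * dtauProd z₁ z₂ :=
  stmt13_general t ht z₁ z₂ hz
end
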